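/- arXiv:1102.5392 — 3 statements merged into one kernel-verified Lean document; each statement's English description precedes it below -/
import Mathlib

section
/- Let p be a prime, G a finite group, P a Sylow p-subgroup of G, and Q a normal subgroup of P such that the quotient P/Q is cyclic. Suppose y ∈ P \ Q has order p, and that every extremal G-conjugate of y lying in P is contained in the coset Qy (an element u ∈ P is called extremal in P if C_P(u) is a Sylow p-subgroup of C_G(u)). Then G has a normal subgroup N with y ∉ N such that G/N is cyclic. -/
open Subgroup MulAction MonoidHom Function


/-- `P` is a Sylow `p`-subgroup of the subgroup `K` of `G`: `P` is a `p`-subgroup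
contained in `K` which is maximal among the `p`-subgroups of `G` contained in `K`. -/
def IsSylowIn {G : Type*} [Group G] (p : ℕ) (P K : Subgroup G) : Prop :=
  P ≤ K ∧ IsPGroup p P ∧ ∀ R : Subgroup G, R ≤ K → IsPGroup p R → P ≤ R → R = P

/-- `u` is an extremal element of the `p`-subgroup `P` of `G`: `u ∈ P` and
`C_P(u)` is a Sylow `p`-subgroup of `C_G(u)`. -/
def IsExtremalIn {G : Type*} [Group G] (p : ℕ) (P : Subgroup G) (u : G) : Prop :=
  u ∈ P ∧ IsSylowIn p (Subgroup.centralizer {u} ⊓ P) (Subgroup.centralizer {u})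

private lemma card_conj_subgroup {G : Type*} [Group G] (b : G) (S T : Subgroup G)
    (h : ∀ g : G, g ∈ S ↔ b⁻¹ * g * b ∈ T) : Nat.card S = Nat.card T := by
  have key : ∀ t : G, b⁻¹ * (b * t * b⁻¹) * b = t := by intro t; group
  apply Nat.card_congr
  exact
    { toFun := fun s => ⟨b⁻¹ * s * b, (h s).mp s.2⟩
      invFun := fun t => ⟨b * t * b⁻¹, (h _).mpr (by rw [key]; exact t.2)⟩
      left_inv := fun s => Subtype.ext (by simp only; group)
      right_inv := fun t => Subtype.ext (by simp only; group) }

theorem aux {G : Type*} [Group G] [Fintype G] {p : ℕ} [hp : Fact p.Prime]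
    (P : Sylow p G) {A : Type*} [CommGroup A] (ϕ : (P : Subgroup G) →* A)
    (y : G) (hyP : y ∈ (P : Subgroup G)) (hy : orderOf y = p)
    (hϕ : ∀ (x : G) (hx : x⁻¹ * y * x ∈ (P : Subgroup G)),
        IsExtremalIn p (P : Subgroup G) (x⁻¹ * y * x) → ϕ ⟨x⁻¹ * y * x, hx⟩ = ϕ ⟨y, hyP⟩)
    (hper : (ϕ ⟨y, hyP⟩) ^ p = 1) :
    ∃ k : ℕ, ¬ p ∣ k ∧ MonoidHom.transfer ϕ y = (ϕ ⟨y, hyP⟩) ^ k := by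
  classical
  letI : Fintype (G ⧸ (↑P : Subgroup G)) := Fintype.ofFinite _
  letI : Fintype (Quotient (orbitRel (zpowers y) (G ⧸ (↑P : Subgroup G)))) := Fintype.ofFinite _
  have hyp1 : y ^ p = 1 := hy ▸ pow_orderOf_eq_one y
  have hmem : ∀ x : G ⧸ (↑P : Subgroup G), x.out⁻¹ * y ^ (Function.minimalPeriod (y • ·) x) * x.out ∈ (↑P : Subgroup G) :=
    fun x => QuotientGroup.out_conj_pow_minimalPeriod_mem (↑P : Subgroup G) y x
  set f : G ⧸ (↑P : Subgroup G) → A := fun x => ϕ ⟨_, hmem x⟩ with hfdef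
  -- fixed points are fixed by all zpowers
  have stab_closure : ∀ (x : G ⧸ (↑P : Subgroup G)), y • x = x → ∀ j : zpowers y, j • x = x := by
    intro x hx j
    have h1 : y ∈ stabilizer G x := hx
    have h2 : (j : G) ∈ stabilizer G x := (zpowers_le.mpr h1) j.2
    exact h2
  have hfix_mem : ∀ x : G ⧸ (↑P : Subgroup G), y • x = x → x.out⁻¹ * y * x.out ∈ (↑P : Subgroup G) := by
    intro x hx
    have h1 : Function.minimalPeriod (y • ·) x = 1 :=
      Function.minimalPeriod_eq_one_iff_isFixedPt.mpr hx
    have := hmem x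
    rwa [h1, pow_one] at this
  have key_fixed : ∀ (x : G ⧸ (↑P : Subgroup G)) (hx : y • x = x),
      f x = ϕ ⟨x.out⁻¹ * y * x.out, hfix_mem x hx⟩ := by
    intro x hx
    have h1 : Function.minimalPeriod (y • ·) x = 1 :=
      Function.minimalPeriod_eq_one_iff_isFixedPt.mpr hx
    simp only [hfdef, h1, pow_one]
  have key_notfixed : ∀ (x : G ⧸ (↑P : Subgroup G)), ¬ (y • x = x) → f x = 1 := by
    intro x hx
    have hdvd : Function.minimalPeriod (y • ·) x ∣ p := by
      apply Function.IsPeriodicPt.minimalPeriod_dvd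
      show (y • ·)^[p] x = x
      rw [smul_iterate, hyp1]; simp
    rcases (Nat.Prime.eq_one_or_self_of_dvd hp.out _ hdvd) with h1 | h1
    · exact absurd (Function.minimalPeriod_eq_one_iff_isFixedPt.mp h1) hx
    · have : (⟨_, hmem x⟩ : (↑P : Subgroup G)) = 1 := by
        apply Subtype.ext
        simp [h1, hyp1]
      rw [hfdef]
      simp only
      rw [this, map_one]
  -- Step 1: transfer as product over all cosets
  have step1 : MonoidHom.transfer ϕ y = ∏ x : G ⧸ (↑P : Subgroup G), f x := by
    rw [MonoidHom.transfer_eq_prod_quotient_orbitRel_zpowers_quot]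
    rw [← Finset.prod_fiberwise Finset.univ
      (fun x : G ⧸ (↑P : Subgroup G) => (Quotient.mk'' x : Quotient (orbitRel (zpowers y) (G ⧸ (↑P : Subgroup G))))) f]
    refine Finset.prod_congr rfl fun q _ => ?_
    by_cases hq : y • q.out = q.out
    · have hfib : Finset.univ.filter
          (fun x : G ⧸ (↑P : Subgroup G) => (Quotient.mk'' x : Quotient (orbitRel (zpowers y) (G ⧸ (↑P : Subgroup G)))) = q)
          = {q.out} := by
        ext x
        simp only [Finset.mem_filter, Finset.mem_univ, true_and, Finset.mem_singleton]
        constructor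
        · intro hxq
          have h2 : x ∈ orbit (zpowers y) q.out := by
            have := hxq.trans (Quotient.out_eq' q).symm
            exact orbitRel_apply.mp (Quotient.eq''.mp this)
          obtain ⟨j, rfl⟩ := h2
          exact stab_closure q.out hq j
        · rintro rfl
          exact Quotient.out_eq' q
      rw [hfib, Finset.prod_singleton]
    · have h1 : f q.out = 1 := key_notfixed q.out hq
      have h2 : ∀ x ∈ Finset.univ.filter
          (fun x : G ⧸ (↑P : Subgroup G) => (Quotient.mk'' x : Quotient (orbitRel (zpowers y) (G ⧸ (↑P : Subgroup G)))) = q),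
          f x = 1 := by
        intro x hx
        simp only [Finset.mem_filter, Finset.mem_univ, true_and] at hx
        apply key_notfixed
        intro hfix
        apply hq
        have h3 : q.out ∈ orbit (zpowers y) x := by
          have := hx.trans (Quotient.out_eq' q).symm
          exact mem_orbit_symm.mp (orbitRel_apply.mp (Quotient.eq''.mp this))
        obtain ⟨j, hj⟩ := h3
        have hj' : j • x = q.out := hj
        rw [← hj', stab_closure x hfix j]
        exact hfix
      rw [Finset.prod_eq_one h2]
      exact h1
  -- Step 2 setup : the centralizer of y acting on cosets
  set D : Subgroup G := Subgroup.centralizer {y} with hDdef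
  letI : Fintype (Quotient (orbitRel D (G ⧸ (↑P : Subgroup G)))) := Fintype.ofFinite _
  have hcomm : ∀ (d : D) (x : G ⧸ (↑P : Subgroup G)), y • (d • x) = d • (y • x) := by
    intro d x
    have hd : y * (d : G) = (d : G) * y :=
      (Subgroup.mem_centralizer_iff.mp d.2) y rfl
    show y • ((d : G) • x) = (d : G) • (y • x)
    rw [smul_smul, smul_smul, hd]
  have hDfix : ∀ (d : D) (x : G ⧸ (↑P : Subgroup G)), y • x = x → y • (d • x) = d • x := by
    intro d x hx; rw [hcomm, hx]
  have hconst : ∀ (x z : G ⧸ (↑P : Subgroup G)), y • z = z → x ∈ orbit D z → f x = f z := by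
    intro x z hz hxz
    obtain ⟨d, rfl⟩ := hxz
    have hx : y • (d • z) = d • z := hDfix d z hz
    rw [key_fixed _ hx, key_fixed z hz]
    set a : G := (d • z).out with ha
    set b : G := z.out with hb
    have hd' : (d : G) * y * (d : G)⁻¹ = y := by
      have hd : y * (d : G) = (d : G) * y :=
        (Subgroup.mem_centralizer_iff.mp d.2) y rfl
      rw [← hd]; group
    have hcos : (((d : G) * b : G) : G ⧸ (↑P : Subgroup G)) = (a : G ⧸ (↑P : Subgroup G)) := by
      rw [ha]
      have h1 : ((d • z).out : G ⧸ (↑P : Subgroup G)) = d • z := Quotient.out_eq' _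
      have h2 : ((b : G) : G ⧸ (↑P : Subgroup G)) = z := Quotient.out_eq' _
      rw [h1, ← h2]
      rfl
    have hh : ((d : G) * b)⁻¹ * a ∈ (↑P : Subgroup G) := QuotientGroup.eq.mp hcos
    have hexp : a⁻¹ * y * a
        = (((d : G) * b)⁻¹ * a)⁻¹ * (b⁻¹ * y * b) * (((d : G) * b)⁻¹ * a) := by
      have e1 : (((d : G) * b)⁻¹ * a)⁻¹ * (b⁻¹ * y * b) * (((d : G) * b)⁻¹ * a)
          = a⁻¹ * ((d : G) * y * (d : G)⁻¹) * a := by group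
      rw [e1, hd']
    have hsub : (⟨a⁻¹ * y * a, hfix_mem _ hx⟩ : (↑P : Subgroup G))
        = ⟨((d : G) * b)⁻¹ * a, hh⟩⁻¹ * ⟨b⁻¹ * y * b, hfix_mem z hz⟩ * ⟨((d : G) * b)⁻¹ * a, hh⟩ :=
      Subtype.ext hexp
    rw [hsub, map_mul, map_mul, map_inv]
    exact inv_mul_cancel_comm _ _
  have hnotconst : ∀ (x z : G ⧸ (↑P : Subgroup G)), ¬ y • z = z → x ∈ orbit D z → ¬ y • x = x := by
    intro x z hz hxz hx
    obtain ⟨d, rfl⟩ := hxz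
    apply hz
    have := hDfix d⁻¹ (d • z) hx
    rwa [inv_smul_smul] at this
  -- the key divisibility for non-extremal fixed cosets
  have orbit_dvd : ∀ z : G ⧸ (↑P : Subgroup G), y • z = z →
      ¬ IsExtremalIn p (↑P : Subgroup G) (z.out⁻¹ * y * z.out) → p ∣ Nat.card (orbit D z) := by
    intro z hz hnot
    set b : G := z.out with hb
    set u : G := b⁻¹ * y * b with hu
    have huH : u ∈ (↑P : Subgroup G) := hfix_mem z hz
    have hcu : ∀ d : G, d ∈ Subgroup.centralizer ({y} : Set G) ↔
        b⁻¹ * d * b ∈ Subgroup.centralizer ({u} : Set G) := by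
      intro d
      simp only [Subgroup.mem_centralizer_iff, Set.mem_singleton_iff, forall_eq, hu]
      constructor
      · intro h
        have e1 : b⁻¹ * y * b * (b⁻¹ * d * b) = b⁻¹ * (y * d) * b := by group
        have e2 : b⁻¹ * d * b * (b⁻¹ * y * b) = b⁻¹ * (d * y) * b := by group
        rw [e1, e2, h]
      · intro h
        have e1 : b⁻¹ * y * b * (b⁻¹ * d * b) = b⁻¹ * (y * d) * b := by group
        have e2 : b⁻¹ * d * b * (b⁻¹ * y * b) = b⁻¹ * (d * y) * b := by group
        rw [e1, e2] at h
        exact mul_left_cancel (mul_right_cancel h)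
    have hzb : ((b : G) : G ⧸ (↑P : Subgroup G)) = z := Quotient.out_eq' _
    have stmem : ∀ d : D, d ∈ stabilizer D z ↔ b⁻¹ * (d : G) * b ∈ (↑P : Subgroup G) := by
      intro d
      constructor
      · intro hd
        have h1 : ((d : G) • z : G ⧸ (↑P : Subgroup G)) = z := hd
        rw [← hzb] at h1
        have h2 : (((d : G) * b : G) : G ⧸ (↑P : Subgroup G)) = ((b : G) : G ⧸ (↑P : Subgroup G)) := h1
        have h3 : ((d : G) * b)⁻¹ * b ∈ (↑P : Subgroup G) := QuotientGroup.eq.mp h2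
        have h4 : (((d : G) * b)⁻¹ * b)⁻¹ ∈ (↑P : Subgroup G) := inv_mem h3
        have h5 : (((d : G) * b)⁻¹ * b)⁻¹ = b⁻¹ * (d : G) * b := by group
        rwa [h5] at h4
      · intro hd
        show (d : G) • z = z
        rw [← hzb]
        show (((d : G) * b : G) : G ⧸ (↑P : Subgroup G)) = ((b : G) : G ⧸ (↑P : Subgroup G))
        apply QuotientGroup.eq.mpr
        have h5 : ((d : G) * b)⁻¹ * b = (b⁻¹ * (d : G) * b)⁻¹ := by group
        rw [h5]
        exact inv_mem hd
    -- the stabilizer has the cardinality of the centralizer-intersection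
    have hstabcard : Nat.card (stabilizer D z)
        = Nat.card (Subgroup.centralizer ({u} : Set G) ⊓ (↑P : Subgroup G) : Subgroup G) := by
      apply Nat.card_congr
      have key : ∀ t : G, b⁻¹ * (b * t * b⁻¹) * b = t := by intro t; group
      exact
        { toFun := fun s => ⟨b⁻¹ * ((s : D) : G) * b,
            ⟨(hcu _).mp (s : D).2, (stmem _).mp s.2⟩⟩
          invFun := fun t => ⟨⟨b * (t : G) * b⁻¹,
              (hcu _).mpr (by rw [key]; exact t.2.1)⟩,
            (stmem _).mpr (by rw [key]; exact t.2.2)⟩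
          left_inv := fun s => Subtype.ext (Subtype.ext (by simp only; group))
          right_inv := fun t => Subtype.ext (by simp only; group) }
    have hDcard : Nat.card D = Nat.card (Subgroup.centralizer ({u} : Set G)) :=
      card_conj_subgroup b _ _ hcu
    -- non-extremality gives a strictly bigger p-subgroup
    have hCHle : Subgroup.centralizer ({u} : Set G) ⊓ (↑P : Subgroup G) ≤ Subgroup.centralizer ({u} : Set G) :=
      inf_le_left
    have hCHp : IsPGroup p (Subgroup.centralizer ({u} : Set G) ⊓ (↑P : Subgroup G) : Subgroup G) :=
      IsPGroup.to_le P.2 inf_le_right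
    obtain ⟨R, hR1, hR2, hR3, hR4⟩ : ∃ R : Subgroup G, R ≤ Subgroup.centralizer ({u} : Set G) ∧
        IsPGroup p R ∧ Subgroup.centralizer ({u} : Set G) ⊓ (↑P : Subgroup G) ≤ R ∧
        R ≠ Subgroup.centralizer ({u} : Set G) ⊓ (↑P : Subgroup G) := by
      by_contra hcon
      push_neg at hcon
      exact hnot ⟨huH, hCHle, hCHp, fun R h1 h2 h3 => hcon R h1 h2 h3⟩
    obtain ⟨sR, hsR⟩ := (IsPGroup.iff_card).mp hR2
    obtain ⟨sC, hsC⟩ := (IsPGroup.iff_card).mp hCHp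
    have hlt : sC < sR := by
      rcases lt_or_ge sC sR with h | h
      · exact h
      · exfalso
        apply hR4
        have hcard : Nat.card R ≤ Nat.card (Subgroup.centralizer ({u} : Set G) ⊓ (↑P : Subgroup G) : Subgroup G) := by
          rw [hsR, hsC]
          exact Nat.pow_le_pow_right hp.out.pos h
        exact (Subgroup.eq_of_le_of_card_ge hR3 hcard).symm
    have hpow : p ^ (sC + 1) ∣ Nat.card (Subgroup.centralizer ({u} : Set G)) := by
      calc p ^ (sC + 1) ∣ p ^ sR := pow_dvd_pow p hlt
        _ = Nat.card R := hsR.symm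
        _ ∣ _ := Subgroup.card_dvd_of_le hR1
    letI : Fintype D := Fintype.ofFinite _
    letI : Fintype (orbit D z) := Fintype.ofFinite _
    letI : Fintype (stabilizer D z) := Fintype.ofFinite _
    have hos : Nat.card (orbit D z) * Nat.card (stabilizer D z) = Nat.card D := by
      rw [Nat.card_eq_fintype_card, Nat.card_eq_fintype_card, Nat.card_eq_fintype_card]
      exact MulAction.card_orbit_mul_card_stabilizer_eq_card_group D z
    have hfinal : p ^ sC * p ∣ p ^ sC * Nat.card (orbit D z) := by
      rw [← pow_succ]
      calc p ^ (sC + 1) ∣ Nat.card (Subgroup.centralizer ({u} : Set G)) := hpow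
        _ = Nat.card D := hDcard.symm
        _ = Nat.card (orbit D z) * Nat.card (stabilizer D z) := hos.symm
        _ = Nat.card (orbit D z) * p ^ sC := by rw [hstabcard, hsC]
        _ = p ^ sC * Nat.card (orbit D z) := mul_comm _ _
    exact (Nat.mul_dvd_mul_iff_left (pow_pos hp.out.pos sC)).mp hfinal
  -- Step 2: the product telescopes over centralizer-orbits
  have step2 : ∏ x : G ⧸ (↑P : Subgroup G), f x
      = ∏ x : G ⧸ (↑P : Subgroup G), (if y • x = x then ϕ ⟨y, hyP⟩ else 1) := by
    rw [← Finset.prod_fiberwise Finset.univ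
      (fun x : G ⧸ (↑P : Subgroup G) => (Quotient.mk'' x : Quotient (orbitRel D (G ⧸ (↑P : Subgroup G))))) f,
      ← Finset.prod_fiberwise Finset.univ
      (fun x : G ⧸ (↑P : Subgroup G) => (Quotient.mk'' x : Quotient (orbitRel D (G ⧸ (↑P : Subgroup G)))))
      (fun x => if y • x = x then ϕ ⟨y, hyP⟩ else 1)]
    refine Finset.prod_congr rfl fun w _ => ?_
    have hfibmem : ∀ x : G ⧸ (↑P : Subgroup G),
        (Quotient.mk'' x : Quotient (orbitRel D (G ⧸ (↑P : Subgroup G)))) = w ↔ x ∈ orbit D w.out := by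
      intro x
      constructor
      · intro hxw
        have h2 : (Quotient.mk'' x : Quotient (orbitRel (↥D) (G ⧸ (↑P : Subgroup G)))) = Quotient.mk'' w.out := by rw [hxw, Quotient.out_eq']
        exact orbitRel_apply.mp (Quotient.eq''.mp h2)
      · intro hxw
        rw [← Quotient.out_eq' w]
        exact Quotient.eq''.mpr (orbitRel_apply.mpr hxw)
    by_cases hw : y • w.out = w.out
    · have hterm : ∀ x ∈ Finset.univ.filter
          (fun x : G ⧸ (↑P : Subgroup G) => (Quotient.mk'' x : Quotient (orbitRel D (G ⧸ (↑P : Subgroup G)))) = w),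
          f x = f w.out ∧ y • x = x := by
        intro x hx
        simp only [Finset.mem_filter, Finset.mem_univ, true_and] at hx
        have hx' := (hfibmem x).mp hx
        refine ⟨hconst x w.out hw hx', ?_⟩
        obtain ⟨d, rfl⟩ := hx'
        exact hDfix d w.out hw
      rw [Finset.prod_congr rfl (fun x hx => (hterm x hx).1),
          Finset.prod_congr rfl (fun x hx => if_pos (hterm x hx).2),
          Finset.prod_const, Finset.prod_const]
      rw [key_fixed w.out hw]
      by_cases hex : IsExtremalIn p (↑P : Subgroup G) (w.out.out⁻¹ * y * w.out.out)
      · rw [hϕ w.out.out (hfix_mem w.out hw) hex]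
      · have hpm : p ∣ (Finset.univ.filter
            (fun x : G ⧸ (↑P : Subgroup G) => (Quotient.mk'' x : Quotient (orbitRel D (G ⧸ (↑P : Subgroup G)))) = w)).card := by
          have hset : Finset.univ.filter
              (fun x : G ⧸ (↑P : Subgroup G) => (Quotient.mk'' x : Quotient (orbitRel D (G ⧸ (↑P : Subgroup G)))) = w)
              = (orbit D w.out).toFinset := by
            ext x
            simp only [Finset.mem_filter, Finset.mem_univ, true_and, Set.mem_toFinset]
            exact hfibmem x
          rw [hset, Set.toFinset_card, ← Nat.card_eq_fintype_card]
          exact orbit_dvd w.out hw hex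
        obtain ⟨m', hm'⟩ := hpm
        rw [hm', pow_mul, pow_mul, hper]
        have hup : (⟨w.out.out⁻¹ * y * w.out.out, hfix_mem w.out hw⟩ : (↑P : Subgroup G)) ^ p = 1 := by
          apply Subtype.ext
          have hcoe : ((⟨w.out.out⁻¹ * y * w.out.out, hfix_mem w.out hw⟩ : (↑P : Subgroup G)) ^ p : (↑P : Subgroup G)) =
              (⟨(w.out.out⁻¹ * y * w.out.out) ^ p, pow_mem (hfix_mem w.out hw) p⟩ : (↑P : Subgroup G)) := by
            apply Subtype.ext
            push_cast
            rfl
          rw [hcoe]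
          show (w.out.out⁻¹ * y * w.out.out) ^ p = 1
          have hconjp := map_pow (MulAut.conj w.out.out⁻¹) y p
          simp only [MulAut.conj_apply, inv_inv] at hconjp
          rw [← hconjp, hyp1]
          group
        rw [← map_pow, hup, map_one, one_pow]
    · refine Finset.prod_congr rfl fun x hx => ?_
      simp only [Finset.mem_filter, Finset.mem_univ, true_and] at hx
      have hnf : ¬ y • x = x := hnotconst x w.out hw ((hfibmem x).mp hx)
      rw [key_notfixed x hnf, if_neg hnf]
  have step3 : ∏ x : G ⧸ (↑P : Subgroup G), (if y • x = x then ϕ ⟨y, hyP⟩ else 1)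
      = (ϕ ⟨y, hyP⟩) ^ (Finset.univ.filter (fun x : G ⧸ (↑P : Subgroup G) => y • x = x)).card := by
    rw [← Finset.prod_filter, Finset.prod_const]
  refine ⟨_, ?_, step1.trans (step2.trans step3)⟩
  -- p does not divide the number of fixed points
  letI : Fintype (fixedPoints (↥(zpowers y)) (G ⧸ (↑P : Subgroup G))) := Fintype.ofFinite _
  have hfixcard : (Finset.univ.filter (fun x : G ⧸ (↑P : Subgroup G) => y • x = x)).card
      = Nat.card (fixedPoints (↥(zpowers y)) (G ⧸ (↑P : Subgroup G))) := by
    have hset : Finset.univ.filter (fun x : G ⧸ (↑P : Subgroup G) => y • x = x)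
        = (fixedPoints (↥(zpowers y)) (G ⧸ (↑P : Subgroup G))).toFinset := by
      ext x
      simp only [Finset.mem_filter, Finset.mem_univ, true_and, Set.mem_toFinset, MulAction.mem_fixedPoints]
      constructor
      · intro h j; exact stab_closure x h j
      · intro h; exact h ⟨y, mem_zpowers y⟩
    rw [hset, Set.toFinset_card, Nat.card_eq_fintype_card]
  rw [hfixcard]
  have hpgrp : IsPGroup p (zpowers y) :=
    (IsPGroup.iff_card).mpr ⟨1, by rw [Nat.card_zpowers, hy, pow_one]⟩
  have hmod := hpgrp.card_modEq_card_fixedPoints (G ⧸ (↑P : Subgroup G))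
  intro hdvd
  have hdvd2 : p ∣ Nat.card (G ⧸ (↑P : Subgroup G)) :=
    (Nat.modEq_zero_iff_dvd).mp (hmod.trans ((Nat.modEq_zero_iff_dvd).mpr hdvd))
  have hidx : ¬ p ∣ (↑P : Subgroup G).index := P.not_dvd_index
  rw [Subgroup.index_eq_card] at hidx
  exact hidx hdvd2

theorem stmt0 {G : Type*} [Group G] [Fintype G] {p : ℕ} [Fact p.Prime]
    (P : Sylow p G) (Q : Subgroup G) (hQle : Q ≤ (P : Subgroup G))
    (hQnorm : ∀ x ∈ (P : Subgroup G), ∀ q ∈ Q, x * q * x⁻¹ ∈ Q)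
    (hcyc : ∃ c ∈ (P : Subgroup G), ∀ g ∈ (P : Subgroup G), ∃ n : ℤ, (c ^ n)⁻¹ * g ∈ Q)
    (y : G) (hyP : y ∈ (P : Subgroup G)) (hyQ : y ∉ Q) (hy : orderOf y = p)
    (hext : ∀ x : G, IsExtremalIn p (P : Subgroup G) (x⁻¹ * y * x) →
      ∃ q ∈ Q, x⁻¹ * y * x = q * y) :
    ∃ N : Subgroup G, N.Normal ∧ y ∉ N ∧ ∃ c : G, ∀ g : G, ∃ n : ℤ, (c ^ n)⁻¹ * g ∈ N := by
  classical
  haveI hQn : (Q.subgroupOf (P : Subgroup G)).Normal := by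
    constructor
    rintro ⟨q, hqP⟩ hq ⟨x, hxP⟩
    rw [Subgroup.mem_subgroupOf] at hq ⊢
    exact hQnorm x hxP q hq
  haveI hAcyc : IsCyclic ((P : Subgroup G) ⧸ Q.subgroupOf (P : Subgroup G)) := by
    obtain ⟨c, hcP, hc⟩ := hcyc
    refine ⟨⟨QuotientGroup.mk ⟨c, hcP⟩, fun a => ?_⟩⟩
    obtain ⟨⟨g, hgP⟩, rfl⟩ := QuotientGroup.mk_surjective a
    obtain ⟨n, hn⟩ := hc g hgP
    have hmain : (QuotientGroup.mk (⟨c, hcP⟩ : (P : Subgroup G)) :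
        (P : Subgroup G) ⧸ Q.subgroupOf (P : Subgroup G)) ^ n = QuotientGroup.mk ⟨g, hgP⟩ := by
      rw [← QuotientGroup.mk_zpow]
      apply QuotientGroup.eq.mpr
      rw [Subgroup.mem_subgroupOf]
      simpa using hn
    exact ⟨n, hmain⟩
  letI : CommGroup ((P : Subgroup G) ⧸ Q.subgroupOf (P : Subgroup G)) := IsCyclic.commGroup
  set ϕ : (P : Subgroup G) →* (P : Subgroup G) ⧸ Q.subgroupOf (P : Subgroup G) :=
    QuotientGroup.mk' (Q.subgroupOf (P : Subgroup G)) with hϕdef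
  have hyp1 : y ^ p = 1 := hy ▸ pow_orderOf_eq_one y
  have hmk : ∀ (g : G) (hg : g ∈ (P : Subgroup G)), ϕ ⟨g, hg⟩ = 1 ↔ g ∈ Q := by
    intro g hg
    rw [hϕdef]
    rw [QuotientGroup.mk'_apply, QuotientGroup.eq_one_iff, Subgroup.mem_subgroupOf]
  have hϕext : ∀ (x : G) (hx : x⁻¹ * y * x ∈ (P : Subgroup G)),
      IsExtremalIn p (P : Subgroup G) (x⁻¹ * y * x) → ϕ ⟨x⁻¹ * y * x, hx⟩ = ϕ ⟨y, hyP⟩ := by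
    intro x hx hex
    obtain ⟨q, hq, hxy⟩ := hext x hex
    have hqP : q ∈ (P : Subgroup G) := hQle hq
    have hsub : (⟨x⁻¹ * y * x, hx⟩ : (P : Subgroup G)) = ⟨q, hqP⟩ * ⟨y, hyP⟩ :=
      Subtype.ext hxy
    rw [hsub, map_mul, (hmk q hqP).mpr hq, one_mul]
  have hper : (ϕ ⟨y, hyP⟩) ^ p = 1 := by
    rw [← map_pow]
    have : (⟨y, hyP⟩ : (P : Subgroup G)) ^ p = 1 := by
      apply Subtype.ext
      push_cast
      exact hyp1
    rw [this, map_one]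
  obtain ⟨k, hpk, hVy⟩ := aux P ϕ y hyP hy hϕext hper
  have hg0 : ϕ ⟨y, hyP⟩ ≠ 1 := fun h => hyQ ((hmk y hyP).mp h)
  have hord : orderOf (ϕ ⟨y, hyP⟩) = p := orderOf_eq_prime hper hg0
  have hVy_ne : MonoidHom.transfer ϕ y ≠ 1 := by
    rw [hVy]
    intro h
    exact hpk (hord ▸ orderOf_dvd_of_pow_eq_one h)
  refine ⟨(MonoidHom.transfer ϕ).ker, MonoidHom.normal_ker _, fun hker => hVy_ne hker, ?_⟩
  haveI : IsCyclic (MonoidHom.transfer ϕ).range := Subgroup.isCyclic _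
  obtain ⟨gen, hgen⟩ := IsCyclic.exists_generator (α := (MonoidHom.transfer ϕ).range)
  obtain ⟨c, hc⟩ := gen.2
  refine ⟨c, fun g => ?_⟩
  obtain ⟨n, hn⟩ := hgen ⟨MonoidHom.transfer ϕ g, ⟨g, rfl⟩⟩
  refine ⟨n, ?_⟩
  have hn' : (MonoidHom.transfer ϕ c) ^ n = MonoidHom.transfer ϕ g := by
    have := congrArg (Subtype.val) hn
    simpa [hc] using this
  rw [MonoidHom.mem_ker, map_mul, map_inv, map_zpow, hn']
  simp
end

section
/- Let p be a prime, G a finite group, P a Sylow p-subgroup of G, and M a subgroup with P ≤ M ≤ G. Suppose y ∈ P has order p and y does not lie in the derived (commutator) subgroup M' of M, and suppose that for every x ∈ G such that x⁻¹yx ∈ P is extremal in P there exists g ∈ M with x⁻¹yx = g⁻¹yg. Then y does not lie in the derived subgroup G' of G. -/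
/-!
The transfer `V : G → M/M'` kills `G'`, so it suffices to show `V y ≠ 1`. As `y` has order `p`,
only the cosets `xM` fixed by `y` contribute to `V y`, each with the class of `x⁻¹yx ∈ M`.
A Sylow `p`-subgroup `Q` of `C_G(y)` containing `y` permutes these contributions, and its orbits
of length divisible by `p` contribute trivially. For a `Q`-fixed coset `xM` we have
`x⁻¹Qx ≤ M`, which can be conjugated inside `M` into `P`; the corresponding conjugate of `y`
is then extremal in `P`, so by hypothesis `x⁻¹yx` is `M`-conjugate to `y`. Hence
`V y = ȳ ^ k` with `k ≡ |G : M| ≢ 0 (mod p)`, while `ȳ ∈ M/M'` has order `p` as `y ∉ M'`.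
-/

open Subgroup MulAction Function Pointwise

section Sylow

variable {G : Type*} [Group G] {p : ℕ}

theorem IsSylowIn.of_le {T S K : Subgroup G} (hT : IsSylowIn p T K) (hTS : T ≤ S) (hSK : S ≤ K)
    (hS : IsPGroup p S) : IsSylowIn p S K := by
  obtain rfl := hT.2.2 S hSK hS hTS
  exact hT

theorem IsSylowIn.conj {T K : Subgroup G} (hT : IsSylowIn p T K) (a : G) :
    IsSylowIn p (MulAut.conj a • T) (MulAut.conj a • K) := by
  refine ⟨pointwise_smul_le_pointwise_smul_iff.2 hT.1, hT.2.1.map _, fun R hRK hR hTR => ?_⟩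
  rw [subset_pointwise_smul_iff] at hRK
  rw [pointwise_smul_subset_iff] at hTR
  exact inv_smul_eq_iff.1 (hT.2.2 _ hRK (hR.map _) hTR)

theorem exists_isSylowIn_ge {R K : Subgroup G} (hRK : R ≤ K) (hR : IsPGroup p R) :
    ∃ Q, R ≤ Q ∧ IsSylowIn p Q K := by
  obtain ⟨S, hS⟩ := (hR.comap_subtype (K := K)).exists_le_sylow
  refine ⟨S.map K.subtype, ?_, map_subtype_le _, S.isPGroup'.map _, fun T hTK hT hST => ?_⟩
  · intro r hr
    exact ⟨⟨r, hRK hr⟩, hS hr, rfl⟩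
  · have hST' : S ≤ T.subgroupOf K := fun x hx => hST ⟨x, hx, rfl⟩
    rw [← S.is_maximal' (hT.comap_subtype (K := K)) hST']
    exact (map_subgroupOf_eq_of_le hTK).symm

theorem conj_smul_centralizer_singleton (a y : G) :
    MulAut.conj a • centralizer {y} = centralizer {a * y * a⁻¹} := by
  ext x
  simp only [mem_pointwise_smul_iff_inv_smul_mem, mem_centralizer_singleton_iff, MulAut.smul_def,
    MulAut.inv_apply, MulAut.conj_symm_apply]
  constructor
  · intro h
    simpa [mul_assoc] using congrArg (MulAut.conj a) h
  · intro h
    simpa [mul_assoc] using congrArg (MulAut.conj a⁻¹) h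

theorem isExtremalIn_of_conj_le {P Q : Subgroup G} {y : G} (hQ : IsSylowIn p Q (centralizer {y}))
    (hyQ : y ∈ Q) (hP : IsPGroup p P) {a : G} (haQ : MulAut.conj a • Q ≤ P) :
    IsExtremalIn p P (a * y * a⁻¹) := by
  have hQ' := hQ.conj a
  rw [conj_smul_centralizer_singleton] at hQ'
  exact ⟨haQ (smul_mem_pointwise_smul y (MulAut.conj a) Q hyQ),
    hQ'.of_le (le_inf hQ'.1 haQ) inf_le_left hP.to_inf_right⟩

theorem Sylow.exists_conj_le_of_le [Finite G] [Fact p.Prime] (P : Sylow p G) {M R : Subgroup G}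
    (hPM : (P : Subgroup G) ≤ M) (hRM : R ≤ M) (hR : IsPGroup p R) :
    ∃ m ∈ M, MulAut.conj m • R ≤ P := by
  obtain ⟨S, hS⟩ := (hR.comap_subtype (K := M)).exists_le_sylow
  obtain ⟨m, hm⟩ := MulAction.exists_smul_eq M S (P.subtype hPM)
  refine ⟨m, m.2, ?_⟩
  rintro _ ⟨r, hr, rfl⟩
  have hmr : MulAut.conj m • (⟨r, hRM hr⟩ : M) ∈ ((m • S : Sylow p M) : Subgroup M) := by
    rw [Sylow.coe_subgroup_smul]
    exact smul_mem_pointwise_smul _ _ _ (hS hr)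
  rw [hm, Sylow.coe_subtype, mem_subgroupOf] at hmr
  exact hmr

theorem exists_conj_eq_of_conj_le [Finite G] [Fact p.Prime] (P : Sylow p G) {M Q : Subgroup G}
    (hPM : (P : Subgroup G) ≤ M) {y : G}
    (hfus : ∀ x : G, IsExtremalIn p (P : Subgroup G) (x⁻¹ * y * x) →
      ∃ g ∈ M, x⁻¹ * y * x = g⁻¹ * y * g)
    (hQ : IsSylowIn p Q (centralizer {y})) (hyQ : y ∈ Q) {x : G}
    (hxQ : MulAut.conj x⁻¹ • Q ≤ M) :
    ∃ g ∈ M, x⁻¹ * y * x = g⁻¹ * y * g := by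
  obtain ⟨m, hm, hmQ⟩ := P.exists_conj_le_of_le hPM hxQ (hQ.2.1.map _)
  rw [← mul_smul, ← map_mul] at hmQ
  have hext := isExtremalIn_of_conj_le hQ hyQ P.isPGroup' hmQ
  obtain ⟨g, hg, hgy⟩ := hfus (x * m⁻¹) (by simpa [mul_assoc] using hext)
  refine ⟨g * m, mul_mem hg hm, ?_⟩
  calc x⁻¹ * y * x = m⁻¹ * ((x * m⁻¹)⁻¹ * y * (x * m⁻¹)) * m := by group
    _ = (g * m)⁻¹ * y * (g * m) := by rw [hgy]; group

end Sylow

section OrbitProducts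

variable {Q α : Type*} [Group Q] [MulAction Q α]

theorem smul_mem_fixedPoints_iff (c : Q) {a : α} :
    c • a ∈ fixedPoints Q α ↔ a ∈ fixedPoints Q α := by
  rw [← subsingleton_orbit_iff_mem_fixedPoints, orbit_smul,
    subsingleton_orbit_iff_mem_fixedPoints]

variable [Fintype α] {A : Type*} [CommMonoid A]

theorem prod_eq_prod_orbitRel_pow [Fintype (orbitRel.Quotient Q α)] {f : α → A}
    (hf : ∀ (c : Q) a, f (c • a) = f a) :
    ∏ a, f a = ∏ ω : orbitRel.Quotient Q α, f ω.out ^ Nat.card (orbit Q ω.out) := by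
  classical
  rw [← (selfEquivSigmaOrbits Q α).symm.prod_comp, Fintype.prod_sigma]
  refine Fintype.prod_congr _ _ fun ω => ?_
  rw [Nat.card_eq_fintype_card, ← Finset.card_univ, ← Finset.prod_const]
  refine Finset.prod_congr rfl fun ⟨b, c, hc⟩ _ => ?_
  exact hc ▸ hf c _

theorem IsPGroup.prod_eq_pow_card_fixedPoints {p : ℕ} [Fact p.Prime] (hQ : IsPGroup p Q)
    {f : α → A} (hf : ∀ (c : Q) a, f (c • a) = f a) (hfp : ∀ a, f a ^ p = 1) {v : A}
    (hv : ∀ a ∈ fixedPoints Q α, f a = v) :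
    ∏ a, f a = v ^ Nat.card (fixedPoints Q α) := by
  classical
  -- `f` and `g` have the same orbit products: orbits of length `> 1` have length divisible by `p`
  let g a := if a ∈ fixedPoints Q α then v else 1
  have hg : ∏ a, g a = v ^ Nat.card (fixedPoints Q α) := by
    simp [g, Finset.prod_ite]
  rw [← hg, prod_eq_prod_orbitRel_pow hf, prod_eq_prod_orbitRel_pow (Q := Q) (f := g) ?_]
  · refine Fintype.prod_congr _ _ fun ω => ?_
    by_cases hω : ω.out ∈ fixedPoints Q α
    · have h1 : Nat.card (orbit Q ω.out) = 1 := by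
        rw [Nat.card_eq_fintype_card]
        exact mem_fixedPoints_iff_card_orbit_eq_one.1 hω
      simp only [g, if_pos hω, h1, pow_one, hv _ hω]
    · obtain ⟨n, hn⟩ := hQ.card_orbit ω.out
      obtain ⟨k, rfl⟩ : ∃ k, n = k + 1 := by
        refine Nat.exists_eq_succ_of_ne_zero fun hn0 => hω ?_
        rw [mem_fixedPoints_iff_card_orbit_eq_one, ← Nat.card_eq_fintype_card, hn, hn0, pow_zero]
      simp only [g, if_neg hω, hn, pow_succ', pow_mul, hfp, one_pow]
  · intro c a
    simp only [g, smul_mem_fixedPoints_iff]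

end OrbitProducts

section Transfer

variable {G : Type*} [Group G] {H : Subgroup G} {A : Type*} [CommGroup A] (ϕ : H →* A)

theorem stabilizer_quotient_eq_conj_smul (q : G ⧸ H) :
    stabilizer G q = MulAut.conj q.out • H := by
  have hq : q = q.out • ((1 : G) : G ⧸ H) := by simp
  conv_lhs => rw [hq, stabilizer_smul_eq_stabilizer_map_conj, stabilizer_quotient]
  rfl

-- The factor of the `⟨g⟩`-orbit of `q` in
-- `MonoidHom.transfer_eq_prod_quotient_orbitRel_zpowers_quot`.
noncomputable def transferFactor (g : G) (q : G ⧸ H) : A :=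
  ϕ ⟨q.out⁻¹ * g ^ minimalPeriod (g • ·) q * q.out,
    QuotientGroup.out_conj_pow_minimalPeriod_mem H g q⟩

theorem MonoidHom.map_inv_mul_mul_eq {M : Type*} [Group M] (f : M →* A) (h u : M) :
    f (h⁻¹ * u * h) = f u := by
  rw [map_mul, map_mul, map_inv, mul_comm, mul_inv_cancel_left]

theorem minimalPeriod_smul_of_commute {α : Type*} [MulAction G α] {g c : G} (hc : Commute c g)
    (a : α) : minimalPeriod (g • ·) (c • a) = minimalPeriod (g • ·) a := by
  rw [minimalPeriod_eq_minimalPeriod_iff]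
  intro n
  simp only [IsPeriodicPt, IsFixedPt, smul_iterate]
  rw [smul_smul, ← (hc.pow_right n).eq, mul_smul, smul_left_cancel_iff]

theorem transferFactor_smul_of_commute {g c : G} (hc : Commute c g) (q : G ⧸ H) :
    transferFactor ϕ g (c • q) = transferFactor ϕ g q := by
  obtain ⟨h, hh⟩ := QuotientGroup.mk_out_eq_mul H (c * q.out)
  have hcq : c • q = (c * q.out : G) := by
    conv_lhs => rw [← QuotientGroup.out_eq' q]
    rfl
  have key : (⟨(c • q).out⁻¹ * g ^ minimalPeriod (g • ·) (c • q) * (c • q).out,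
      QuotientGroup.out_conj_pow_minimalPeriod_mem H g (c • q)⟩ : H) =
      h⁻¹ * ⟨q.out⁻¹ * g ^ minimalPeriod (g • ·) q * q.out,
        QuotientGroup.out_conj_pow_minimalPeriod_mem H g q⟩ * h := by
    apply Subtype.ext
    simp only [coe_mul, coe_inv]
    rw [minimalPeriod_smul_of_commute hc]
    set k := minimalPeriod (g • ·) q
    rw [hcq, hh]
    calc (c * q.out * h)⁻¹ * g ^ k * (c * q.out * h)
        = (h : G)⁻¹ * q.out⁻¹ * (c⁻¹ * (g ^ k * c)) * q.out * h := by group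
      _ = (h : G)⁻¹ * (q.out⁻¹ * g ^ k * q.out) * h := by
        rw [← (hc.pow_right k).eq, inv_mul_cancel_left]; group
  rw [transferFactor, transferFactor, key, ϕ.map_inv_mul_mul_eq]

theorem transferFactor_of_smul_eq {g : G} {q : G ⧸ H} (hq : g • q = q) (u : H)
    (hu : (u : G) = q.out⁻¹ * g * q.out) : transferFactor ϕ g q = ϕ u := by
  have : minimalPeriod (g • ·) q = 1 := minimalPeriod_eq_one_iff_isFixedPt.2 hq
  simp only [transferFactor, this, pow_one, ← hu]

theorem transferFactor_pow_eq_one {g : G} {n : ℕ} (hg : g ^ n = 1) (q : G ⧸ H) :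
    transferFactor ϕ g q ^ n = 1 := by
  rw [transferFactor, ← map_pow]
  convert map_one ϕ
  ext
  have hgk : (g ^ minimalPeriod (g • ·) q) ^ n = 1 := by
    rw [← pow_mul, mul_comm, pow_mul, hg, one_pow]
  simpa [hgk] using conj_pow (a := q.out⁻¹) (b := g ^ minimalPeriod (g • ·) q) (i := n)

theorem transferFactor_pow_minimalPeriod {p : ℕ} [Fact p.Prime] {g : G} (hg : g ^ p = 1)
    (q : G ⧸ H) : transferFactor ϕ g q ^ minimalPeriod (g • ·) q = transferFactor ϕ g q := by
  have hdvd : minimalPeriod (g • ·) q ∣ p := by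
    refine IsPeriodicPt.minimalPeriod_dvd ?_
    simp only [IsPeriodicPt, IsFixedPt, smul_iterate, hg, one_smul]
  rcases (Fact.out : p.Prime).eq_one_or_self_of_dvd _ hdvd with h | h
  · rw [h, pow_one]
  · rw [h, transferFactor_pow_eq_one ϕ hg, eq_comm]
    simp only [transferFactor, h, hg, mul_one, inv_mul_cancel]
    exact map_one ϕ

theorem transfer_eq_prod_transferFactor [H.FiniteIndex] [Fintype (G ⧸ H)] {p : ℕ} [Fact p.Prime]
    {g : G} (hg : g ^ p = 1) : ϕ.transfer g = ∏ q : G ⧸ H, transferFactor ϕ g q := by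
  classical
  rw [MonoidHom.transfer_eq_prod_quotient_orbitRel_zpowers_quot]
  change ∏ ω : orbitRel.Quotient (zpowers g) (G ⧸ H), transferFactor ϕ g ω.out = _
  rw [prod_eq_prod_orbitRel_pow (Q := zpowers g) (f := transferFactor ϕ g) fun c q => ?_]
  · refine Fintype.prod_congr _ _ fun ω => ?_
    -- the orbits are taken for the instance `mulLeftCosetsCompSubtypeVal`, only defeq to ours
    erw [Nat.card_congr (orbitZPowersEquiv g ω.out), Nat.card_zmod,
      transferFactor_pow_minimalPeriod ϕ hg]
  · obtain ⟨k, hk⟩ := mem_zpowers_iff.1 c.2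
    exact transferFactor_smul_of_commute ϕ
      (show Commute (c : G) g from hk ▸ (Commute.refl g).zpow_left k) q

end Transfer

theorem transferFactor_eq_of_mem_fixedPoints {G : Type*} [Group G] {p : ℕ} [Finite G]
    [Fact p.Prime] (P : Sylow p G) {M Q : Subgroup G} (hPM : (P : Subgroup G) ≤ M) {y : G}
    (hyM : y ∈ M)
    (hfus : ∀ x : G, IsExtremalIn p (P : Subgroup G) (x⁻¹ * y * x) →
      ∃ g ∈ M, x⁻¹ * y * x = g⁻¹ * y * g)
    (hQ : IsSylowIn p Q (centralizer {y})) (hyQ : y ∈ Q) {A : Type*} [CommGroup A] (ϕ : M →* A)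
    {q : G ⧸ M} (hq : q ∈ fixedPoints Q (G ⧸ M)) :
    transferFactor ϕ y q = ϕ ⟨y, hyM⟩ := by
  have hQq : MulAut.conj q.out⁻¹ • Q ≤ M := by
    rw [map_inv, pointwise_smul_subset_iff, inv_inv, ← stabilizer_quotient_eq_conj_smul]
    exact fun c hc => hq ⟨c, hc⟩
  obtain ⟨g, hg, hgy⟩ := exists_conj_eq_of_conj_le P hPM hfus hQ hyQ hQq
  have hfixed : y • q = q := hq ⟨y, hyQ⟩
  rw [transferFactor_of_smul_eq ϕ hfixed (⟨g, hg⟩⁻¹ * ⟨y, hyM⟩ * ⟨g, hg⟩)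
    (by simp [hgy]), ϕ.map_inv_mul_mul_eq]

theorem orderOf_abelianization_of_eq_prime {G : Type*} [Group G] {p : ℕ} [Fact p.Prime]
    {M : Subgroup G} {y : G} (hyM : y ∈ M) (hyM' : y ∉ ⁅M, M⁆) (hy : y ^ p = 1) :
    orderOf (Abelianization.of (⟨y, hyM⟩ : M)) = p := by
  refine orderOf_eq_prime ?_ fun hy1 => hyM' ?_
  · rw [← map_pow, show (⟨y, hyM⟩ : M) ^ p = 1 from Subtype.ext hy, map_one]
  · rw [← map_subtype_commutator, ← Abelianization.ker_of]
    exact ⟨_, MonoidHom.mem_ker.2 hy1, rfl⟩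

theorem stmt1 {G : Type*} [Group G] [Fintype G] {p : ℕ} [Fact p.Prime]
    (P : Sylow p G) (M : Subgroup G) (hPM : (P : Subgroup G) ≤ M)
    (y : G) (hyP : y ∈ (P : Subgroup G)) (hy : orderOf y = p)
    (hyM : y ∉ ⁅M, M⁆)
    (hfus : ∀ x : G, IsExtremalIn p (P : Subgroup G) (x⁻¹ * y * x) →
      ∃ g ∈ M, x⁻¹ * y * x = g⁻¹ * y * g) :
    y ∉ commutator G := by
  classical
  intro hyG
  have hyp : y ^ p = 1 := hy ▸ pow_orderOf_eq_one y
  obtain ⟨Q, hQy, hQ⟩ := exists_isSylowIn_ge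
    (zpowers_le.2 (mem_centralizer_singleton_iff.2 rfl))
    (IsPGroup.of_card (by rw [Nat.card_zpowers, hy, pow_one]) : IsPGroup p (zpowers y))
  set v := Abelianization.of (⟨y, hPM hyP⟩ : M)
  have hv : orderOf v = p := orderOf_abelianization_of_eq_prime _ hyM hyp
  have htransfer :
      (Abelianization.of : M →* _).transfer y = v ^ Nat.card (fixedPoints Q (G ⧸ M)) := by
    rw [transfer_eq_prod_transferFactor _ hyp]
    refine hQ.2.1.prod_eq_pow_card_fixedPoints
      (fun c q => transferFactor_smul_of_commute _ (mem_centralizer_singleton_iff.1 (hQ.1 c.2)) q)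
      (fun q => transferFactor_pow_eq_one _ hyp q)
      (fun q hq => transferFactor_eq_of_mem_fixedPoints P hPM _ hfus hQ (hQy (mem_zpowers y)) _ hq)
  have hcard : Nat.card (fixedPoints Q (G ⧸ M)) ≡ M.index [MOD p] := by
    rw [index_eq_card]
    exact (hQ.2.1.card_modEq_card_fixedPoints (G ⧸ M)).symm
  have hindex : ¬ p ∣ M.index := fun h => P.not_dvd_index (h.trans (index_dvd_of_le hPM))
  have hvN : v ^ Nat.card (fixedPoints Q (G ⧸ M)) = 1 :=
    htransfer ▸ Abelianization.commutator_subset_ker _ hyG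
  exact hindex ((hcard.dvd_iff dvd_rfl).1 (hv ▸ orderOf_dvd_of_pow_eq_one hvN))
end

section
/- Let E be an extraspecial 2-group (a non-abelian finite 2-group whose center has order 2 and whose quotient by the center is elementary abelian) and let x be an automorphism of E with x² = 1. Let [E,x] denote the subgroup of E generated by all elements g⁻¹·x(g) for g ∈ E. If x fixes every element of [E,x] (i.e. [E,x] ≤ C_E(x)), then [E,x] is elementary abelian: every element of [E,x] squares to the identity, and [E,x] is abelian. -/
theorem stmt5 {E : Type*} [Group E] [Finite E]
    (h2 : IsPGroup 2 E) (hnonab : ¬ ∀ a b : E, a * b = b * a)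
    (hcenter : Nat.card (Subgroup.center E) = 2)
    (hsq : ∀ g : E, g ^ 2 ∈ Subgroup.center E)
    (x : MulAut E) (hx : x ^ 2 = 1)
    (C : Subgroup E) (hC : C = Subgroup.closure {g : E | ∃ e : E, g = e⁻¹ * x e})
    (hfix : ∀ g ∈ C, x g = g) :
    (∀ g ∈ C, g ^ 2 = 1) ∧ ∀ a ∈ C, ∀ b ∈ C, a * b = b * a := by
  set S := {g : E | ∃ e : E, g = e⁻¹ * x e} with hS
  -- every central element squares to 1
  have hz2 : ∀ z ∈ Subgroup.center E, z * z = 1 := by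
    intro z hz
    have h1 : (⟨z, hz⟩ : Subgroup.center E) ^ 2 = 1 := by
      rw [← hcenter]; exact pow_card_eq_one'
    have := congrArg Subtype.val h1
    simpa [pow_two] using this
  -- commutators are central
  have hcomm : ∀ a b : E, b⁻¹ * a⁻¹ * b * a ∈ Subgroup.center E := by
    intro a b
    have sq1 : ∀ p : E ⧸ Subgroup.center E, p * p = 1 := by
      intro p
      induction p using QuotientGroup.induction_on with
      | H g =>
        have : ((g ^ 2 : E) : E ⧸ Subgroup.center E) = 1 :=
          (QuotientGroup.eq_one_iff _).mpr (hsq g)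
        simpa [pow_two] using this
    have key : ∀ p q : E ⧸ Subgroup.center E, p * q = q * p := by
      intro p q
      have hpinv : p⁻¹ = p := by rw [inv_eq_iff_mul_eq_one]; exact sq1 p
      have hqinv : q⁻¹ = q := by rw [inv_eq_iff_mul_eq_one]; exact sq1 q
      have h3 : p * q = (p * q)⁻¹ := by
        rw [eq_inv_iff_mul_eq_one]; exact sq1 _
      rw [h3, mul_inv_rev, hpinv, hqinv]
    rw [← QuotientGroup.eq_one_iff]
    simp only [QuotientGroup.mk_mul, QuotientGroup.mk_inv]
    simp only [QuotientGroup.mk_mul, QuotientGroup.mk_inv, mul_assoc]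
    rw [key ((b : E) : E ⧸ Subgroup.center E) ((a : E) : E ⧸ Subgroup.center E)]
    simp
  -- x inverts generators
  have hxgen : ∀ s ∈ S, x s = s⁻¹ := by
    rintro s ⟨e, rfl⟩
    have hxx : x (x e) = e := by
      have : (x * x) e = e := by rw [← pow_two, hx]; rfl
      simpa using this
    simp [map_mul, hxx, mul_inv_rev]
  -- generators square to 1
  have hgen2 : ∀ s ∈ S, s * s = 1 := by
    intro s hs
    have h1 : x s = s := hfix s (hC ▸ Subgroup.subset_closure hs)
    have h2' : s = s⁻¹ := h1.symm.trans (hxgen s hs)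
    nth_rewrite 1 [h2']
    exact inv_mul_cancel s
  -- generators pairwise commute
  have hgencomm : ∀ a ∈ S, ∀ b ∈ S, a * b = b * a := by
    rintro a ⟨e, rfl⟩ b ⟨f, rfl⟩
    set a := e⁻¹ * x e with ha
    set b := f⁻¹ * x f with hb
    have hc2 : ((e * f)⁻¹ * x (e * f)) * ((e * f)⁻¹ * x (e * f)) = 1 :=
      hgen2 _ ⟨e * f, rfl⟩
    set K := a⁻¹ * f⁻¹ * a * f with hK
    have hKc : K ∈ Subgroup.center E := hcomm f a
    have hK4 : ∀ g : E, g * K = K * g := fun g => Subgroup.mem_center_iff.mp hKc g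
    have hK3 : ∀ g h : E, g * (K * h) = K * (g * h) := by
      intro g h; rw [← mul_assoc, hK4, mul_assoc]
    have hK2 : K * K = 1 := hz2 K hKc
    have hcform : (e * f)⁻¹ * x (e * f) = a * K * b := by
      rw [hK, ha, hb]
      simp only [map_mul, mul_inv_rev, mul_assoc, mul_inv_cancel_left, inv_mul_cancel_left]
    rw [hcform] at hc2
    have ha2 : a * a = 1 := hgen2 a ⟨e, ha⟩
    have hb2 : b * b = 1 := hgen2 b ⟨f, hb⟩
    have hab2 : (a * b) * (a * b) = 1 := by
      have step : a * K * b * (a * K * b) = K * (K * ((a * b) * (a * b))) := by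
        simp only [mul_assoc, hK4, hK3]
      rw [step, ← mul_assoc K K, hK2, one_mul] at hc2
      exact hc2
    have hainv : a⁻¹ = a := by rw [inv_eq_iff_mul_eq_one]; exact ha2
    have hbinv : b⁻¹ = b := by rw [inv_eq_iff_mul_eq_one]; exact hb2
    have h5 : a * b = (a * b)⁻¹ := by rw [eq_inv_iff_mul_eq_one]; exact hab2
    rw [h5, mul_inv_rev, hainv, hbinv]
  -- every element of C commutes with every generator
  have hCgen : ∀ g ∈ C, ∀ s ∈ S, g * s = s * g := by
    intro g hg
    rw [hC] at hg
    refine Subgroup.closure_induction (p := fun g _ => ∀ s ∈ S, g * s = s * g)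
      (fun a ha s hs => hgencomm a ha s hs) (by simp)
      (fun a b _ _ pa pb s hs => ?_) (fun a _ pa s hs => ?_) hg
    · rw [mul_assoc, pb s hs, ← mul_assoc, pa s hs, mul_assoc]
    · exact (Commute.inv_left (pa s hs)).eq
  -- C is abelian
  have hCab : ∀ a ∈ C, ∀ b ∈ C, a * b = b * a := by
    intro a ha b hb
    rw [hC] at hb
    refine Subgroup.closure_induction (p := fun b _ => a * b = b * a)
      (fun s hs => show a * s = s * a from hCgen a ha s hs) (by simp)
      (fun u v _ _ pu pv => ?_) (fun u _ pu => ?_) hb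
    · show a * (u * v) = (u * v) * a
      rw [← mul_assoc, pu, mul_assoc, pv, ← mul_assoc]
    · exact (Commute.inv_right pu).eq
  refine ⟨?_, hCab⟩
  intro g hg
  have hg' := hg
  rw [hC] at hg'
  refine Subgroup.closure_induction (p := fun g _ => g ^ 2 = 1)
    (fun s hs => by show s ^ 2 = 1; rw [pow_two]; exact hgen2 s hs) (by simp)
    (fun u v hu hv pu pv => ?_) (fun u _ pu => by simpa using congrArg (·⁻¹) pu) hg'
  · show (u * v) ^ 2 = 1
    have hcuv : Commute u v := hCab u (hC ▸ hu) v (hC ▸ hv)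
    rw [hcuv.mul_pow, pu, pv, one_mul]
end
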